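/- arXiv:2302.08692 — 2 statements merged into one kernel-verified Lean document; each statement's English description precedes it below -/
import Mathlib

section
/- If H is symmetric positive definite and some eigenvalue λ of H satisfies α·λ(1+ρλ) > 2 + ε for ε > 0, then there exists an initial point x_0 of arbitrarily small norm such that ‖x_t‖ → ∞ under x_{t+1} = (I - α(H+ρH²))x_t; in fact ‖x_t‖ ≥ (1+ε)^t ‖x_0‖ when x_0 is the corresponding eigenvector. -/
/-! On the eigenline of `v` the SAM step is multiplication by `μ = 1 - αλ(1 + ρλ)`, so
`x_t = μ^t x_0`; the instability condition forces `μ < -(1 + ε)`. -/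

open Matrix Filter

theorem Matrix.toEuclideanLin_add_smul_mul_self_apply {𝕜 n : Type*} [RCLike 𝕜] [Fintype n]
    [DecidableEq n] {H : Matrix n n 𝕜} {lam : 𝕜} {v : EuclideanSpace 𝕜 n}
    (hv : toEuclideanLin H v = lam • v) (ρ : 𝕜) :
    toEuclideanLin (H + ρ • (H * H)) v = (lam + ρ * (lam * lam)) • v := by
  simp only [map_add, map_smul, toLpLin_mul_same, LinearMap.add_apply, LinearMap.smul_apply,
    LinearMap.comp_apply, hv, smul_smul, add_smul, mul_comm lam]

section
variable {R E : Type*} [CommRing R] [AddCommGroup E] [Module R E]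

theorem eq_pow_smul_of_sub_smul_apply_eq_smul (A : E →ₗ[R] E) {κ α : R} {w : E}
    (hw : A w = κ • w) {x : ℕ → E} (h0 : x 0 = w) (hstep : ∀ t, x (t + 1) = x t - α • A (x t))
    (t : ℕ) : x t = (1 - α * κ) ^ t • w := by
  induction t with
  | zero => simp [h0]
  | succ t ih =>
    rw [hstep, ih, map_smul, hw, pow_succ, smul_smul, smul_smul, ← sub_smul]
    ring_nf
end

section
variable {𝕜 E : Type*} [NormedField 𝕜] [NormedAddCommGroup E] [NormedSpace 𝕜 E]

theorem pow_mul_norm_le_norm_pow_smul {r : ℝ} {μ : 𝕜} (hr0 : 0 ≤ r) (hr : r ≤ ‖μ‖) (w : E)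
    (t : ℕ) : r ^ t * ‖w‖ ≤ ‖μ ^ t • w‖ := by
  rw [norm_smul, norm_pow]
  gcongr

theorem tendsto_norm_pow_smul_atTop {μ : 𝕜} (hμ : 1 < ‖μ‖) {w : E} (hw : w ≠ 0) :
    Tendsto (fun t : ℕ => ‖μ ^ t • w‖) atTop atTop := by
  simp_rw [norm_smul, norm_pow]
  exact (tendsto_pow_atTop_atTop_of_one_lt hμ).atTop_mul_const (norm_pos_iff.mpr hw)
end

theorem sam_quadratic_divergence_general (d : ℕ) (H : Matrix (Fin d) (Fin d) ℝ)
    (α ρ ε : ℝ) (hε : 0 < ε) (lam : ℝ) (v : EuclideanSpace ℝ (Fin d)) (hv : v ≠ 0)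
    (hev : Matrix.toEuclideanLin H v = lam • v)
    (hunstable : α * (lam * (1 + ρ * lam)) > 2 + ε) :
    ∀ δ > 0, ∃ x₀ : EuclideanSpace ℝ (Fin d), x₀ ≠ 0 ∧ ‖x₀‖ < δ ∧ (∃ c : ℝ, x₀ = c • v) ∧
      ∀ x : ℕ → EuclideanSpace ℝ (Fin d), x 0 = x₀ →
        (∀ t, x (t + 1) = x t - α • (Matrix.toEuclideanLin (H + ρ • (H * H))) (x t)) →
        (∀ t, (1 + ε) ^ t * ‖x 0‖ ≤ ‖x t‖) ∧
          Tendsto (fun t => ‖x t‖) atTop atTop := by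
  intro δ hδ
  have hv_pos : 0 < ‖v‖ := norm_pos_iff.mpr hv
  set c := δ / (2 * ‖v‖)
  have hc : 0 < c := by positivity
  set μ := 1 - α * (lam + ρ * (lam * lam))
  have hμ : 1 + ε ≤ ‖μ‖ := by
    rw [Real.norm_eq_abs, abs_of_neg (by nlinarith)]
    nlinarith
  refine ⟨c • v, smul_ne_zero hc.ne' hv, ?_, ⟨c, rfl⟩, fun x hx0 hstep => ?_⟩
  · rw [norm_smul, Real.norm_of_nonneg hc.le, div_mul_eq_mul_div, mul_div_mul_right _ _ hv_pos.ne']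
    linarith
  have hx : ∀ t, x t = μ ^ t • x 0 := by
    refine eq_pow_smul_of_sub_smul_apply_eq_smul _ ?_ rfl hstep
    rw [hx0, map_smul, toEuclideanLin_add_smul_mul_self_apply hev, smul_comm]
  refine ⟨fun t => hx t ▸ pow_mul_norm_le_norm_pow_smul (by positivity) hμ _ t, ?_⟩
  exact (tendsto_norm_pow_smul_atTop (by linarith) (hx0 ▸ smul_ne_zero hc.ne' hv)).congr
    fun t => by rw [← hx t]

/-- if some eigenvalue λ of symmetric positive definite `H` satisfies
`αλ(1+ρλ) > 2 + ε`, then there are initial points of arbitrarily small norm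
(multiples of the corresponding eigenvector) for which the SAM iteration
`x_{t+1} = (I - α(H+ρH²))x_t` satisfies `‖x_t‖ ≥ (1+ε)^t‖x_0‖` and `‖x_t‖ → ∞`. -/
theorem sam_quadratic_divergence (d : ℕ) (H : Matrix (Fin d) (Fin d) ℝ)
    (hsymm : H.IsSymm) (hpos : H.PosDef) (α ρ ε : ℝ) (hα : 0 < α) (hρ : 0 < ρ)
    (hε : 0 < ε) (lam : ℝ) (v : EuclideanSpace ℝ (Fin d)) (hv : v ≠ 0)
    (hev : Matrix.toEuclideanLin H v = lam • v)
    (hunstable : α * (lam * (1 + ρ * lam)) > 2 + ε) :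
    ∀ δ > 0, ∃ x₀ : EuclideanSpace ℝ (Fin d), x₀ ≠ 0 ∧ ‖x₀‖ < δ ∧ (∃ c : ℝ, x₀ = c • v) ∧
      ∀ x : ℕ → EuclideanSpace ℝ (Fin d), x 0 = x₀ →
        (∀ t, x (t + 1) = x t - α • (Matrix.toEuclideanLin (H + ρ • (H * H))) (x t)) →
        (∀ t, (1 + ε) ^ t * ‖x 0‖ ≤ ‖x t‖) ∧
          Tendsto (fun t => ‖x t‖) atTop atTop :=
  sam_quadratic_divergence_general d H α ρ ε hε lam v hv hev hunstable
end

section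
/- Let M be a real symmetric D×D matrix with an eigenvalue μ satisfying |μ| ≥ 1 + ε (ε > 0), eigenvector v with ‖v‖=1, and let e: ℝ^D → ℝ^D satisfy ‖e(z)‖ ≤ c‖z‖². Then there exists d > 0 such that for any 0 < δ < d, the iteration z_{t+1} = M z_t + e(z_t) started at z_0 = δv satisfies: either some z_t has ‖z_t‖ ≥ d, or |v·z_t| ≥ (1 + ε/2)^t δ for all t; consequently the trajectory leaves the ball of radius d in finite time. -/
/-!
In an orthonormal eigenbasis of `M`, split the coordinates into those with `|λ| ≥ 1 + ε`, which
`M` stretches by at least `1 + ε`, and the others, which it scales by at most some `θ < 1 + ε`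
(there are finitely many eigenvalues). Inside the ball of radius `d` the error satisfies
`‖e z‖ ≤ c d ‖z‖`, so for small `d` the cone `‖Q z‖ ≤ ‖P z‖` is invariant and the expanding part
`‖P z‖` grows by a factor `1 + ε - 2cd > 1` per step. The orbit starts in the cone, since `δ v` has
no contracting component; as `‖P z_t‖ ≤ ‖z_t‖`, it must leave the ball.
-/

namespace EuclideanSpace

variable {ι : Type*}

noncomputable def indicatorHom (s : Set ι) : EuclideanSpace ℝ ι →+ EuclideanSpace ℝ ι where
  toFun x := WithLp.toLp 2 (s.indicator x)
  map_zero' := by ext; simp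
  map_add' x y := by ext; simp [Set.indicator_add']

@[simp]
theorem indicatorHom_apply (s : Set ι) (x : EuclideanSpace ℝ ι) (i : ι) :
    indicatorHom s x i = s.indicator x i := rfl

theorem indicatorHom_add_compl (s : Set ι) (x : EuclideanSpace ℝ ι) :
    indicatorHom s x + indicatorHom sᶜ x = x := by
  ext i
  simp [Set.indicator_self_add_compl_apply]

variable [Fintype ι]

theorem norm_le_norm_of_forall_abs_le {x y : EuclideanSpace ℝ ι} (h : ∀ i, |x i| ≤ |y i|) :
    ‖x‖ ≤ ‖y‖ := by
  rw [EuclideanSpace.norm_eq, EuclideanSpace.norm_eq]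
  gcongr with i
  simpa only [Real.norm_eq_abs] using h i

theorem norm_indicatorHom_le (s : Set ι) (x : EuclideanSpace ℝ ι) :
    ‖indicatorHom s x‖ ≤ ‖x‖ :=
  norm_le_norm_of_forall_abs_le fun i => by by_cases hi : i ∈ s <;> simp [hi]

variable {s : Set ι} {l : ι → ℝ} {x y : EuclideanSpace ℝ ι}

theorem mul_norm_indicatorHom_le {a : ℝ} (ha : 0 ≤ a) (hl : ∀ i ∈ s, a ≤ |l i|)
    (hy : ∀ i, y i = l i * x i) : a * ‖indicatorHom s x‖ ≤ ‖indicatorHom s y‖ := by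
  rw [← abs_of_nonneg ha, ← Real.norm_eq_abs, ← norm_smul]
  refine norm_le_norm_of_forall_abs_le fun i => ?_
  by_cases hi : i ∈ s
  · simpa [hi, hy, abs_mul, abs_of_nonneg ha] using
      mul_le_mul_of_nonneg_right (hl i hi) (abs_nonneg (x i))
  · simp [hi]

theorem norm_indicatorHom_le_mul {θ : ℝ} (hθ : 0 ≤ θ) (hl : ∀ i ∈ s, |l i| ≤ θ)
    (hy : ∀ i, y i = l i * x i) : ‖indicatorHom s y‖ ≤ θ * ‖indicatorHom s x‖ := by
  rw [← abs_of_nonneg hθ, ← Real.norm_eq_abs, ← norm_smul]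
  refine norm_le_norm_of_forall_abs_le fun i => ?_
  by_cases hi : i ∈ s
  · simpa [hi, hy, abs_mul, abs_of_nonneg hθ] using
      mul_le_mul_of_nonneg_right (hl i hi) (abs_nonneg (x i))
  · simp [hi]

end EuclideanSpace

/-- `P w` and `Q w` measure the components of `w` along which `M` expands by at least `a` and
contracts to at most `θ`; they need not be projections, only norm-compatible with `w`. -/
structure DominatedSplitting {E F : Type*} [NormedAddCommGroup E] [NormedAddCommGroup F]
    (P Q : E →+ F) (M : E → E) (a θ : ℝ) : Prop where
  norm_le_add : ∀ w, ‖w‖ ≤ ‖P w‖ + ‖Q w‖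
  norm_fst_le : ∀ w, ‖P w‖ ≤ ‖w‖
  norm_snd_le : ∀ w, ‖Q w‖ ≤ ‖w‖
  expand : ∀ w, a * ‖P w‖ ≤ ‖P (M w)‖
  contract : ∀ w, ‖Q (M w)‖ ≤ θ * ‖Q w‖

namespace DominatedSplitting

variable {E F : Type*} [NormedAddCommGroup E] [NormedAddCommGroup F] {P Q : E →+ F}
  {M e : E → E} {a θ c d : ℝ}

theorem cone_step (h : DominatedSplitting P Q M a θ) (he : ∀ w, ‖e w‖ ≤ c * ‖w‖ ^ 2)
    (hc : 0 ≤ c) (hθ : 0 ≤ θ) (hgap : θ + 4 * c * d ≤ a) {w : E} (hcone : ‖Q w‖ ≤ ‖P w‖)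
    (hw : ‖w‖ ≤ d) :
    ‖Q (M w + e w)‖ ≤ ‖P (M w + e w)‖ ∧ (a - 2 * c * d) * ‖P w‖ ≤ ‖P (M w + e w)‖ := by
  have hd : 0 ≤ d := (norm_nonneg w).trans hw
  -- inside the cone, `‖w‖ ≤ 2 ‖P w‖`, so the quadratic error is linear in `‖P w‖` with slope `2cd`
  have hew : ‖e w‖ ≤ 2 * c * d * ‖P w‖ :=
    calc ‖e w‖ ≤ c * (‖w‖ * ‖w‖) := by simpa only [sq] using he w
      _ ≤ c * (d * (‖P w‖ + ‖Q w‖)) :=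
        mul_le_mul_of_nonneg_left (mul_le_mul hw (h.norm_le_add w) (norm_nonneg w) hd) hc
      _ ≤ 2 * c * d * ‖P w‖ := by nlinarith [mul_nonneg hc hd]
  have hgrow : (a - 2 * c * d) * ‖P w‖ ≤ ‖P (M w + e w)‖ := by
    rw [map_add]
    linarith [h.expand w, norm_le_add_norm_add (P (M w)) (P (e w)), h.norm_fst_le (e w)]
  refine ⟨?_, hgrow⟩
  calc ‖Q (M w + e w)‖ ≤ ‖Q (M w)‖ + ‖Q (e w)‖ := by rw [map_add]; exact norm_add_le _ _
    _ ≤ θ * ‖P w‖ + 2 * c * d * ‖P w‖ := by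
      gcongr
      · exact (h.contract w).trans (by gcongr)
      · exact (h.norm_snd_le _).trans hew
    _ ≤ (a - 2 * c * d) * ‖P w‖ := by nlinarith [norm_nonneg (P w)]
    _ ≤ ‖P (M w + e w)‖ := hgrow

theorem cone_trajectory (h : DominatedSplitting P Q M a θ) (he : ∀ w, ‖e w‖ ≤ c * ‖w‖ ^ 2)
    (hc : 0 ≤ c) (hθ : 0 ≤ θ) (hgap : θ + 4 * c * d ≤ a) {z : ℕ → E}
    (hz : ∀ t, z (t + 1) = M (z t) + e (z t)) (hcone : ‖Q (z 0)‖ ≤ ‖P (z 0)‖)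
    (hzd : ∀ t, ‖z t‖ ≤ d) (t : ℕ) :
    ‖Q (z t)‖ ≤ ‖P (z t)‖ ∧ (a - 2 * c * d) ^ t * ‖P (z 0)‖ ≤ ‖P (z t)‖ := by
  induction t with
  | zero => simpa using hcone
  | succ t ih =>
    obtain ⟨hcone', hgrow'⟩ := h.cone_step he hc hθ hgap ih.1 (hzd t)
    have hrate : 0 ≤ a - 2 * c * d := by nlinarith [mul_nonneg hc ((norm_nonneg _).trans (hzd 0))]
    rw [hz t, pow_succ', mul_assoc]
    exact ⟨hcone', (mul_le_mul_of_nonneg_left ih.2 hrate).trans hgrow'⟩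

theorem exists_lt_norm (h : DominatedSplitting P Q M a θ) (he : ∀ w, ‖e w‖ ≤ c * ‖w‖ ^ 2)
    (hc : 0 ≤ c) (hθ : 0 ≤ θ) (hgap : θ + 4 * c * d ≤ a) (hrate : 1 < a - 2 * c * d)
    {z : ℕ → E} (hz : ∀ t, z (t + 1) = M (z t) + e (z t)) (hQ0 : Q (z 0) = 0) (hz0 : z 0 ≠ 0) :
    ∃ t, d < ‖z t‖ := by
  by_contra! hzd
  have hP0 : 0 < ‖P (z 0)‖ := by
    simpa [hQ0] using (norm_pos_iff.2 hz0).trans_le (h.norm_le_add (z 0))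
  obtain ⟨t, ht⟩ := pow_unbounded_of_one_lt (d / ‖P (z 0)‖) hrate
  have hgrow := (h.cone_trajectory he hc hθ hgap hz (by simp [hQ0]) hzd t).2
  rw [div_lt_iff₀ hP0] at ht
  linarith [h.norm_fst_le (z t), hzd t]

end DominatedSplitting

theorem exists_nonneg_lt_forall_abs_le {ι : Type*} [Fintype ι] (l : ι → ℝ) {a : ℝ} (ha : 0 < a) :
    ∃ θ, 0 ≤ θ ∧ θ < a ∧ ∀ i, |l i| < a → |l i| ≤ θ := by
  classical
  set T : Finset ℝ := insert 0 ((Finset.univ.filter fun i => |l i| < a).image fun i => |l i|)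
  refine ⟨T.max' (Finset.insert_nonempty _ _), T.le_max' 0 (Finset.mem_insert_self _ _),
    (T.max'_lt_iff _).2 fun y hy => ?_, fun i hi => T.le_max' _
      (Finset.mem_insert_of_mem (Finset.mem_image_of_mem _ (by simpa using hi)))⟩
  simp only [T, Finset.mem_insert, Finset.mem_image, Finset.mem_filter] at hy
  obtain rfl | ⟨i, ⟨-, hi⟩, rfl⟩ := hy
  exacts [ha, hi]

namespace LinearMap.IsSymmetric

open EuclideanSpace

variable {E : Type*} [NormedAddCommGroup E] [InnerProductSpace ℝ E] [FiniteDimensional ℝ E]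
  {T : E →ₗ[ℝ] E}

theorem exists_dominatedSplitting (hT : T.IsSymmetric) {n : ℕ} (hn : Module.finrank ℝ E = n)
    {a θ : ℝ} (ha : 0 ≤ a) (hθ : 0 ≤ θ)
    (hsmall : ∀ i, |hT.eigenvalues hn i| < a → |hT.eigenvalues hn i| ≤ θ) :
    ∃ P Q : E →+ EuclideanSpace ℝ (Fin n), DominatedSplitting P Q T a θ ∧
      ∀ (μ : ℝ) (v : E), T v = μ • v → a ≤ |μ| → Q v = 0 := by
  set b := hT.eigenvectorBasis hn
  set l := hT.eigenvalues hn
  have hdiag : ∀ w i, b.repr (T w) i = l i * b.repr w i := hT.eigenvectorBasis_apply_self_apply hn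
  let s : Set (Fin n) := {i | a ≤ |l i|}
  refine ⟨(indicatorHom s).comp (b.repr : E →+ EuclideanSpace ℝ (Fin n)),
    (indicatorHom sᶜ).comp (b.repr : E →+ EuclideanSpace ℝ (Fin n)), ⟨fun w => ?_, fun w => ?_,
    fun w => ?_, fun w => ?_, fun w => ?_⟩, fun μ v hv hμ => ?_⟩
  · calc ‖w‖ = ‖indicatorHom s (b.repr w) + indicatorHom sᶜ (b.repr w)‖ := by
          rw [indicatorHom_add_compl, b.repr.norm_map]
      _ ≤ _ := norm_add_le _ _
  · simpa using norm_indicatorHom_le s (b.repr w)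
  · simpa using norm_indicatorHom_le sᶜ (b.repr w)
  · exact mul_norm_indicatorHom_le ha (fun i hi => hi) (hdiag w)
  · exact norm_indicatorHom_le_mul hθ (fun i hi => hsmall i (not_le.1 hi)) (hdiag w)
  · ext i
    by_cases hi : i ∈ s
    · simp [hi]
    have hne : l i ≠ μ := fun h => hi (show a ≤ |l i| from h ▸ hμ)
    have : (l i - μ) * b.repr v i = 0 := by simp [sub_mul, ← hdiag, hv]
    simpa [hi, sub_ne_zero.2 hne] using this

end LinearMap.IsSymmetric

/-- perturbed linear instability. If symmetric `M` has an eigenvalue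
`μ` with `|μ| ≥ 1 + ε` and unit eigenvector `v`, and `‖e(z)‖ ≤ c‖z‖²`, then there is
`d > 0` such that for any `0 < δ < d`, the trajectory of `z_{t+1} = Mz_t + e(z_t)`
started at `z_0 = δv` either reaches norm `≥ d`, or has `|v·z_t| ≥ (1+ε/2)^t δ` for
all `t`; consequently it leaves the ball of radius `d` in finite time. -/
theorem perturbed_linear_instability (D : ℕ) (ε c : ℝ) (hε : 0 < ε)
    (M : EuclideanSpace ℝ (Fin D) →L[ℝ] EuclideanSpace ℝ (Fin D))
    (hMsa : IsSelfAdjoint M) (μ : ℝ) (hμ : 1 + ε ≤ |μ|)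
    (v : EuclideanSpace ℝ (Fin D)) (hv : ‖v‖ = 1) (hMv : M v = μ • v)
    (e : EuclideanSpace ℝ (Fin D) → EuclideanSpace ℝ (Fin D))
    (he : ∀ z, ‖e z‖ ≤ c * ‖z‖ ^ 2) :
    ∃ d > 0, ∀ δ : ℝ, 0 < δ → δ < d →
      ∀ z : ℕ → EuclideanSpace ℝ (Fin D), z 0 = δ • v →
        (∀ t, z (t + 1) = M (z t) + e (z t)) →
        ((∃ t, d ≤ ‖z t‖) ∨ ∀ t, (1 + ε / 2) ^ t * δ ≤ |(inner ℝ v (z t) : ℝ)|) ∧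
          ∃ t, d ≤ ‖z t‖ := by
  have hM : (M : EuclideanSpace ℝ (Fin D) →ₗ[ℝ] EuclideanSpace ℝ (Fin D)).IsSymmetric :=
    hMsa.isSymmetric
  have hD : Module.finrank ℝ (EuclideanSpace ℝ (Fin D)) = D := finrank_euclideanSpace_fin
  obtain ⟨θ, hθ, hθε, hsmall⟩ := exists_nonneg_lt_forall_abs_le (hM.eigenvalues hD)
    (by linarith : (0 : ℝ) < 1 + ε)
  obtain ⟨P, Q, hPQ, hQ⟩ := hM.exists_dominatedSplitting hD (by linarith) hθ hsmall
  set c₀ := max c 0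
  have he₀ : ∀ w, ‖e w‖ ≤ c₀ * ‖w‖ ^ 2 := fun w => (he w).trans (by gcongr; exact le_max_left c 0)
  obtain ⟨d, hd, hcd⟩ := exists_pos_mul_lt (lt_min hε (sub_pos.2 hθε)) (4 * c₀)
  refine ⟨d, hd, fun δ hδ _ z hz0 hz => ?_⟩
  have hexit : ∃ t, d ≤ ‖z t‖ := by
    have hc₀ : 0 ≤ c₀ := le_max_right c 0
    obtain ⟨t, ht⟩ := hPQ.exists_lt_norm (d := d) he₀ hc₀ hθ
      (by linarith [min_le_right ε (1 + ε - θ)]) (by linarith [min_le_left ε (1 + ε - θ)]) hz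
      (hz0 ▸ hQ μ (δ • v) (by rw [map_smul, ContinuousLinearMap.coe_coe, hMv, smul_comm]) hμ)
      (by rw [hz0]; exact smul_ne_zero hδ.ne' (norm_ne_zero_iff.1 (by simp [hv])))
    exact ⟨t, ht.le⟩
  exact ⟨Or.inl hexit, hexit⟩
end
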